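/- For every ℚ-vector space V, the canonical ℤ-linear map from the second exterior power of V regarded as a ℤ-module to the second exterior power of V over ℚ, determined on generators by v ∧_ℤ w ↦ v ∧_ℚ w, is bijective. In particular, Λ²_ℤ ℂ → Λ²_ℚ ℂ is an isomorphism. -/

import Mathlib

/-- The wedge product `v ∧ w` of two elements of an `R`-module `V`, as an element of
the second exterior power `⋀[R]^2 V`. -/
noncomputable def wedge (R : Type*) [CommRing R] {V : Type*} [AddCommGroup V]
    [Module R V] (v w : V) : ⋀[R]^2 V :=
  ⟨ExteriorAlgebra.ιMulti R 2 ![v, w],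
    ExteriorAlgebra.ιMulti_range R 2 ⟨![v, w], rfl⟩⟩

/-!
Scaling by a nonzero integer `k` is an automorphism of the `ℚ`-vector space `V`; it induces an
automorphism of `⋀[ℤ]^n V`, which is multiplication by `k ^ n`. For `n ≠ 0` this makes
`⋀[ℤ]^n V` uniquely divisible, hence a `ℚ`-vector space. Additive maps between `ℚ`-vector spaces
are `ℚ`-linear, so `ιMulti ℤ n` is `ℚ`-alternating and lifts to a map `⋀[ℚ]^n V → ⋀[ℤ]^n V`,
which is inverse to the canonical map on generators.
-/

open Function

namespace AlternatingMap

variable {ι M N : Type*} [AddCommGroup M] [AddCommGroup N]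

def restrictScalars (R : Type*) {A : Type*} [Semiring R] [Semiring A] [SMul R A]
    [Module R M] [Module A M] [Module R N] [Module A N] [IsScalarTower R A M]
    [IsScalarTower R A N] (f : M [⋀^ι]→ₗ[A] N) : M [⋀^ι]→ₗ[R] N :=
  { f.toMultilinearMap.restrictScalars R with map_eq_zero_of_eq' := f.map_eq_zero_of_eq' }

variable [Module ℚ M] [Module ℚ N]

def toRatAlternatingMap (f : M [⋀^ι]→ₗ[ℤ] N) : M [⋀^ι]→ₗ[ℚ] N where
  toFun := f
  map_update_add' m := f.map_update_add m
  map_update_smul' m i := map_rat_smul (f.toMultilinearMap.toLinearMap m i)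
  map_eq_zero_of_eq' := f.map_eq_zero_of_eq'

end AlternatingMap

theorem Module.nonempty_rat_of_bijective_zsmul {A : Type*} [AddCommGroup A]
    (h : ∀ k : ℤ, k ≠ 0 → Bijective fun x : A ↦ k • x) : Nonempty (Module ℚ A) := by
  -- `IsLocalization.lift` needs a commutative target, hence the center of `Module.End ℤ A`.
  let C := Subring.center (Module.End ℤ A)
  have hunit (k : nonZeroDivisors ℤ) : IsUnit (Int.castRingHom C k) := by
    obtain ⟨u, hu⟩ := (Module.End.isUnit_iff (k : Module.End ℤ A)).2 <| by
      convert h k (nonZeroDivisors.ne_zero k.2) using 1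
      exact funext (Module.End.intCast_apply k)
    have hmem : (u : Module.End ℤ A) ∈ C := hu ▸ Set.intCast_mem_center _ (k : ℤ)
    exact ⟨⟨⟨u, hmem⟩, ⟨_, Set.units_inv_mem_center hmem⟩, Subtype.ext u.mul_inv,
      Subtype.ext u.inv_mul⟩, Subtype.ext (by simpa using hu)⟩
  exact ⟨Module.compHom A (C.subtype.comp (IsLocalization.lift (S := ℚ) hunit))⟩

theorem bijective_zsmul_of_bijective_zsmul_pow {A : Type*} [AddCommGroup A] {k : ℤ} {n : ℕ}
    (hn : n ≠ 0) (h : Bijective fun x : A ↦ k ^ n • x) : Bijective fun x : A ↦ k • x := by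
  obtain ⟨n, rfl⟩ := Nat.exists_eq_succ_of_ne_zero hn
  refine ⟨Injective.of_comp (f := fun x : A ↦ k ^ n • x) ?_,
    Surjective.of_comp (g := fun x : A ↦ k ^ n • x) ?_⟩
  · simpa [comp_def, smul_smul, ← pow_succ] using h.1
  · simpa [comp_def, smul_smul, ← pow_succ'] using h.2

namespace exteriorPower

variable {R : Type*} [CommRing R] {n : ℕ} {M N : Type*} [AddCommGroup M] [Module R M]
  [AddCommGroup N] [Module R N]

theorem map_bijective (e : M ≃ₗ[R] N) : Bijective (map n (e : M →ₗ[R] N)) :=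
  bijective_iff_has_inverse.2 ⟨map n (e.symm : N →ₗ[R] M),
    fun x ↦ by rw [← LinearMap.comp_apply, ← map_comp, e.symm_comp, map_id, LinearMap.id_apply],
    fun x ↦ by rw [← LinearMap.comp_apply, ← map_comp, e.comp_symm, map_id, LinearMap.id_apply]⟩

theorem map_smul_id (r : R) : map n (r • LinearMap.id : M →ₗ[R] M) = r ^ n • LinearMap.id := by
  ext m
  simp [AlternatingMap.map_smul_univ]

section

variable (S : Type*) [CommRing S] {V : Type*} [AddCommGroup V] [Module S V]

noncomputable def fromInt (n : ℕ) : ⋀[ℤ]^n V →ₗ[ℤ] ⋀[S]^n V :=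
  alternatingMapLinearEquiv ((ιMulti S n).restrictScalars ℤ)

theorem fromInt_ιMulti (m : Fin n → V) : fromInt S n (ιMulti ℤ n m) = ιMulti S n m :=
  alternatingMapLinearEquiv_apply_ιMulti _ m

variable {S}

theorem eq_fromInt {f : ⋀[ℤ]^n V →ₗ[ℤ] ⋀[S]^n V}
    (hf : ∀ m, f (ιMulti ℤ n m) = ιMulti S n m) : f = fromInt S n :=
  linearMap_ext <| AlternatingMap.ext fun m ↦ by simp [hf, fromInt_ιMulti]

end

variable {V : Type*} [AddCommGroup V] [Module ℚ V]

theorem bijective_zsmul (hn : n ≠ 0) {k : ℤ} (hk : k ≠ 0) :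
    Bijective fun x : ⋀[ℤ]^n V ↦ k • x := by
  refine bijective_zsmul_of_bijective_zsmul_pow hn ?_
  let e : V ≃ₗ[ℤ] V := (LinearEquiv.smulOfNeZero ℚ V k (by exact_mod_cast hk)).restrictScalars ℤ
  have he : (e : V →ₗ[ℤ] V) = k • LinearMap.id := by ext x; exact Int.cast_smul_eq_zsmul ℚ k x
  have := map_bijective (n := n) e
  rwa [he, map_smul_id] at this

theorem fromInt_bijective (hn : n ≠ 0) : Bijective (fromInt ℚ n : ⋀[ℤ]^n V →ₗ[ℤ] ⋀[ℚ]^n V) := by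
  obtain ⟨_⟩ := Module.nonempty_rat_of_bijective_zsmul fun k hk ↦ bijective_zsmul (V := V) hn hk
  let g : ⋀[ℚ]^n V →ₗ[ℚ] ⋀[ℤ]^n V :=
    alternatingMapLinearEquiv (ιMulti ℤ n).toRatAlternatingMap
  have hg (m : Fin n → V) : g (ιMulti ℚ n m) = ιMulti ℤ n m :=
    alternatingMapLinearEquiv_apply_ιMulti _ m
  have hgf : g.toAddMonoidHom.toIntLinearMap ∘ₗ fromInt ℚ n = LinearMap.id :=
    linearMap_ext <| AlternatingMap.ext fun m ↦ by simp [fromInt_ιMulti, hg]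
  have hfg : (fromInt ℚ n).toAddMonoidHom.toRatLinearMap ∘ₗ g = LinearMap.id :=
    linearMap_ext <| AlternatingMap.ext fun m ↦ by simp [fromInt_ιMulti, hg]
  exact bijective_iff_has_inverse.2 ⟨g, LinearMap.congr_fun hgf, LinearMap.congr_fun hfg⟩

end exteriorPower

/-- For a `ℚ`-vector space `V`, the canonical `ℤ`-linear map `Λ²_ℤ V → Λ²_ℚ V`,
determined on generators by `v ∧_ℤ w ↦ v ∧_ℚ w`, exists and is bijective (and any
`ℤ`-linear map with this generator property is bijective). -/
theorem exteriorPower_int_to_rat_bijective (V : Type*) [AddCommGroup V] [Module ℚ V] :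
    (∃ f : (⋀[ℤ]^2 V) →ₗ[ℤ] (⋀[ℚ]^2 V),
      (∀ v w : V, f (wedge ℤ v w) = wedge ℚ v w) ∧ Function.Bijective f) ∧
    (∀ f : (⋀[ℤ]^2 V) →ₗ[ℤ] (⋀[ℚ]^2 V),
      (∀ v w : V, f (wedge ℤ v w) = wedge ℚ v w) → Function.Bijective f) := by
  refine ⟨⟨exteriorPower.fromInt ℚ 2, fun v w ↦ exteriorPower.fromInt_ιMulti ℚ ![v, w],
    exteriorPower.fromInt_bijective two_ne_zero⟩, fun f hf ↦ ?_⟩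
  have hf' (m : Fin 2 → V) : f (exteriorPower.ιMulti ℤ 2 m) = exteriorPower.ιMulti ℚ 2 m := by
    rw [← FinVec.etaExpand_eq m]
    exact hf (m 0) (m 1)
  rw [exteriorPower.eq_fromInt hf']
  exact exteriorPower.fromInt_bijective two_ne_zero
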